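/- If the language L is based on a countably infinite set of atoms, then the n-bisimulation metric topology on a modal space X (where modal equivalence coincides with bisimilarity and X is sufficiently rich) is strictly finer than the Stone topology on X: every Stone-open set is open in the n-bisimulation topology, but the 0-bisimulation ball B_{x,0} around a suitable point x is not Stone-open. -/

import Mathlib

/-- Modal formulas over atoms `Φ` and agents `I`. -/
inductive Form (Φ I : Type) : Type
  | top : Form Φ I
  | atom : Φ → Form Φ I
  | neg : Form Φ I → Form Φ I
  | and : Form Φ I → Form Φ I → Form Φ I
  | box : I → Form Φ I → Form Φ I

/-- A Kripke model: worlds, accessibility per agent, valuation. -/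
structure KripkeModel (Φ I : Type) where
  W : Type
  R : I → W → W → Prop
  V : Φ → W → Prop

/-- Satisfaction of a formula at a world. -/
def KripkeModel.sat {Φ I : Type} (M : KripkeModel Φ I) : M.W → Form Φ I → Prop
  | _, Form.top => True
  | w, Form.atom p => M.V p w
  | w, Form.neg φ => ¬ M.sat w φ
  | w, Form.and φ ψ => M.sat w φ ∧ M.sat w ψ
  | w, Form.box i φ => ∀ v, M.R i w v → M.sat v φ

/-- A pointed Kripke model. -/
structure PointedModel (Φ I : Type) where
  M : KripkeModel Φ I
  s : M.W

def PointedModel.sat {Φ I : Type} (x : PointedModel Φ I) (φ : Form Φ I) : Prop :=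
  x.M.sat x.s φ

/-- Modal equivalence: satisfying the same formulas. -/
def modEquiv {Φ I : Type} (x y : PointedModel Φ I) : Prop :=
  ∀ φ : Form Φ I, x.sat φ ↔ y.sat φ

/-- `n`-bisimilarity of pointed models. -/
def nBisim {Φ I : Type} : ℕ → PointedModel Φ I → PointedModel Φ I → Prop
  | 0, x, y => ∀ p, x.M.V p x.s ↔ y.M.V p y.s
  | n+1, x, y => (∀ p, x.M.V p x.s ↔ y.M.V p y.s) ∧
      (∀ i t, x.M.R i x.s t → ∃ u, y.M.R i y.s u ∧ nBisim n ⟨x.M, t⟩ ⟨y.M, u⟩) ∧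
      (∀ i u, y.M.R i y.s u → ∃ t, x.M.R i x.s t ∧ nBisim n ⟨x.M, t⟩ ⟨y.M, u⟩)

/-- (Full) bisimilarity of pointed models. -/
def Bisimilar {Φ I : Type} (x y : PointedModel Φ I) : Prop :=
  ∃ Z : x.M.W → y.M.W → Prop, Z x.s y.s ∧
    (∀ s t, Z s t → ∀ p, x.M.V p s ↔ y.M.V p t) ∧
    (∀ s t, Z s t → ∀ i s', x.M.R i s s' → ∃ t', y.M.R i t t' ∧ Z s' t') ∧
    (∀ s t, Z s t → ∀ i t', y.M.R i t t' → ∃ s', x.M.R i s s' ∧ Z s' t')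

/-- The modal space over `X`: the quotient of `X` by modal equivalence. -/
def MSpace {Φ I : Type} (X : Set (PointedModel Φ I)) : Type 1 :=
  Quot (fun x y : X => modEquiv x.1 y.1)

/-- Satisfaction on the modal space (well-defined on equivalence classes). -/
def satQ {Φ I : Type} {X : Set (PointedModel Φ I)} (φ : Form Φ I) : MSpace X → Prop :=
  Quot.lift (fun x : X => x.1.sat φ) (fun _ _ h => propext (h φ))

/-- The basic opens of the Stone topology: `U_φ = {x : x ⊨ φ}`. -/
def stoneBasis {Φ I : Type} (X : Set (PointedModel Φ I)) : Set (Set (MSpace X)) :=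
  {S | ∃ φ : Form Φ I, S = {a : MSpace X | satQ φ a}}

/-- The Stone topology on a modal space. -/
def stoneTop {Φ I : Type} (X : Set (PointedModel Φ I)) : TopologicalSpace (MSpace X) :=
  TopologicalSpace.generateFrom (stoneBasis X)

/-- `n`-bisimilarity on the modal space (via representatives). -/
def nBisimQ {Φ I : Type} {X : Set (PointedModel Φ I)} (n : ℕ) (a b : MSpace X) : Prop :=
  ∃ x y : X, Quot.mk _ x = a ∧ Quot.mk _ y = b ∧ nBisim n x.1 y.1

/-- Basic opens of the `n`-bisimulation (metric) topology: balls `B_{x,n}`. -/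
def bisimBasis {Φ I : Type} (X : Set (PointedModel Φ I)) : Set (Set (MSpace X)) :=
  {S | ∃ (a : MSpace X) (n : ℕ), S = {b : MSpace X | nBisimQ n a b}}

/-- The `n`-bisimulation metric topology on a modal space. -/
def bisimTop {Φ I : Type} (X : Set (PointedModel Φ I)) : TopologicalSpace (MSpace X) :=
  TopologicalSpace.generateFrom (bisimBasis X)

/-
Fineness: a formula of modal depth `n` cannot distinguish `n`-bisimilar points, so each Stone
basic open `U_φ` contains the `depth φ`-ball around each of its points.

Strictness: in the space of one-world models without transitions, indexed by their sets of true
atoms, the point `x` making every atom true has a 0-ball consisting of `x` alone. Every Stone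
neighbourhood `U_φ` of `x` also contains the model making exactly the atoms up to the largest
one occurring in `φ` true, since `φ` cannot see the remaining atoms.
-/

open Topology TopologicalSpace

namespace Form

variable {Φ I : Type}

def depth : Form Φ I → ℕ
  | top => 0
  | atom _ => 0
  | neg φ => depth φ
  | and φ ψ => max (depth φ) (depth ψ)
  | box _ φ => depth φ + 1

end Form

section Bisimulation

variable {Φ I : Type}

lemma nBisim.atom_iff {n : ℕ} {x y : PointedModel Φ I} (h : nBisim n x y) (p : Φ) :
    x.M.V p x.s ↔ y.M.V p y.s := by
  cases n with
  | zero => exact h p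
  | succ n => exact h.1 p

lemma nBisim_refl : ∀ (n : ℕ) (x : PointedModel Φ I), nBisim n x x
  | 0, _ => fun _ => Iff.rfl
  | n + 1, _ => ⟨fun _ => Iff.rfl, fun _ t ht => ⟨t, ht, nBisim_refl n _⟩,
      fun _ u hu => ⟨u, hu, nBisim_refl n _⟩⟩

lemma PointedModel.sat_iff_of_nBisim (φ : Form Φ I) :
    ∀ {n : ℕ} {x y : PointedModel Φ I}, φ.depth ≤ n → nBisim n x y →
      (x.sat φ ↔ y.sat φ) := by
  induction φ with
  | top => exact fun _ _ => Iff.rfl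
  | atom p => exact fun _ h => h.atom_iff p
  | neg φ ih => exact fun hd h => not_congr (ih hd h)
  | and φ ψ ihφ ihψ =>
    exact fun hd h => and_congr (ihφ (le_of_max_le_left hd) h) (ihψ (le_of_max_le_right hd) h)
  | box i φ ih =>
    intro n x y hd h
    cases n with
    | zero => exact absurd hd (Nat.not_succ_le_zero _)
    | succ m => ?_
    have hdm : φ.depth ≤ m := Nat.le_of_succ_le_succ hd
    constructor
    · intro hx u hu
      obtain ⟨t, ht, htu⟩ := h.2.2 i u hu
      exact (ih hdm htu).mp (hx t ht)
    · intro hy t ht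
      obtain ⟨u, hu, htu⟩ := h.2.1 i t ht
      exact (ih hdm htu).mpr (hy u hu)

lemma Bisimilar.refl (x : PointedModel Φ I) : Bisimilar x x :=
  ⟨Eq, rfl, by rintro s _ rfl p; rfl, by rintro s _ rfl i s' hs; exact ⟨s', hs, rfl⟩,
    by rintro s _ rfl i t' ht; exact ⟨t', ht, rfl⟩⟩

lemma Bisimilar.atom_iff {x y : PointedModel Φ I} (h : Bisimilar x y) (p : Φ) :
    x.M.V p x.s ↔ y.M.V p y.s :=
  let ⟨_, hZ, hV, _⟩ := h
  hV _ _ hZ p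

end Bisimulation

section ModalSpace

variable {Φ I : Type} {X : Set (PointedModel Φ I)}

lemma modEquiv_equivalence : Equivalence (fun x y : X => modEquiv x.1 y.1) :=
  ⟨fun _ _ => Iff.rfl, fun h φ => (h φ).symm, fun h₁ h₂ φ => (h₁ φ).trans (h₂ φ)⟩

lemma modEquiv_of_mk_eq {x y : X} (h : (Quot.mk _ x : MSpace X) = Quot.mk _ y) :
    modEquiv x.1 y.1 :=
  modEquiv_equivalence.eqvGen_iff.mp (Quot.eqvGen_exact h)

lemma mem_nBisimQ_self (n : ℕ) (a : MSpace X) : nBisimQ n a a := by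
  induction a using Quot.ind with
  | mk x => exact ⟨x, x, rfl, rfl, nBisim_refl n x.1⟩

lemma satQ_of_nBisimQ {φ : Form Φ I} {n : ℕ} (hd : φ.depth ≤ n) {a b : MSpace X}
    (hab : nBisimQ n a b) (ha : satQ φ a) : satQ φ b := by
  obtain ⟨x, y, rfl, rfl, hxy⟩ := hab
  exact (PointedModel.sat_iff_of_nBisim φ hd hxy).mp ha

lemma atom_iff_of_nBisimQ_zero {x y : X} (h : nBisimQ 0 (Quot.mk _ x : MSpace X) (Quot.mk _ y))
    (p : Φ) : x.1.M.V p x.1.s ↔ y.1.M.V p y.1.s := by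
  obtain ⟨x', y', hx, hy, h⟩ := h
  exact ((modEquiv_of_mk_eq hx) (.atom p)).symm.trans ((h p).trans (modEquiv_of_mk_eq hy (.atom p)))

lemma isOpen_bisimTop_ball (a : MSpace X) (n : ℕ) :
    IsOpen[bisimTop X] {b | nBisimQ n a b} :=
  .basic _ ⟨a, n, rfl⟩

lemma isOpen_bisimTop_setOf_satQ (φ : Form Φ I) : IsOpen[bisimTop X] {a | satQ φ a} := by
  let := bisimTop X
  exact isOpen_iff_forall_mem_open.mpr fun a ha =>
    ⟨_, fun _ hb => satQ_of_nBisimQ le_rfl hb ha, isOpen_bisimTop_ball a φ.depth,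
      mem_nBisimQ_self _ a⟩

theorem bisimTop_le_stoneTop : bisimTop X ≤ stoneTop X :=
  le_generateFrom_iff_subset_isOpen.mpr <| by
    rintro _ ⟨φ, rfl⟩
    exact isOpen_bisimTop_setOf_satQ φ

lemma isTopologicalBasis_stoneBasis : IsTopologicalBasis (t := stoneTop X) (stoneBasis X) := by
  refine @IsTopologicalBasis.mk _ (stoneTop X) _ ?_ ?_ rfl
  · rintro _ ⟨φ, rfl⟩ _ ⟨ψ, rfl⟩ a ha
    refine ⟨_, ⟨.and φ ψ, rfl⟩, ?_, fun b hb => ?_⟩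
    · induction a using Quot.ind with
      | mk x => exact ha
    · induction b using Quot.ind with
      | mk y => exact hb
  · refine Set.sUnion_eq_univ_iff.mpr fun a => ⟨_, ⟨.top, rfl⟩, ?_⟩
    induction a using Quot.ind with
    | mk x => trivial

end ModalSpace

section DeadModels

def deadModel (S : Set ℕ) : PointedModel ℕ Unit :=
  ⟨⟨Unit, fun _ _ _ => False, fun p _ => p ∈ S⟩, ()⟩

def Form.maxAtom {I : Type} : Form ℕ I → ℕ
  | top => 0
  | atom p => p
  | neg φ => maxAtom φ
  | and φ ψ => max (maxAtom φ) (maxAtom ψ)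
  | box _ φ => maxAtom φ

lemma deadModel_sat_congr {S T : Set ℕ} (φ : Form ℕ Unit)
    (h : ∀ p ≤ φ.maxAtom, p ∈ S ↔ p ∈ T) :
    (deadModel S).sat φ ↔ (deadModel T).sat φ := by
  induction φ with
  | top => exact Iff.rfl
  | atom p => exact h p le_rfl
  | neg φ ih => exact not_congr (ih h)
  | and φ ψ ihφ ihψ =>
    exact and_congr (ihφ fun p hp => h p (le_max_of_le_left hp))
      (ihψ fun p hp => h p (le_max_of_le_right hp))
  | box => exact ⟨fun _ _ hv => hv.elim, fun _ _ hv => hv.elim⟩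

lemma eq_of_atom_iff_of_mem_range_deadModel {x y : PointedModel ℕ Unit}
    (hx : x ∈ Set.range deadModel) (hy : y ∈ Set.range deadModel)
    (h : ∀ p, x.M.V p x.s ↔ y.M.V p y.s) : x = y := by
  obtain ⟨S, rfl⟩ := hx
  obtain ⟨T, rfl⟩ := hy
  exact congrArg deadModel (Set.ext h)

lemma modEquiv_iff_bisimilar_of_mem_range_deadModel {x y : PointedModel ℕ Unit}
    (hx : x ∈ Set.range deadModel) (hy : y ∈ Set.range deadModel) :
    modEquiv x y ↔ Bisimilar x y := by
  constructor
  · intro h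
    obtain rfl := eq_of_atom_iff_of_mem_range_deadModel hx hy fun p => h (.atom p)
    exact Bisimilar.refl x
  · intro h
    obtain rfl := eq_of_atom_iff_of_mem_range_deadModel hx hy h.atom_iff
    exact fun _ => Iff.rfl

lemma not_isOpen_stoneTop_ball_deadModel_univ :
    ¬ IsOpen[stoneTop (Set.range deadModel)]
      {b | nBisimQ 0
        (Quot.mk _ ⟨deadModel .univ, .univ, rfl⟩ : MSpace (Set.range deadModel)) b} := by
  intro hopen
  obtain ⟨_, ⟨φ, rfl⟩, hφ, hsub⟩ :=
    (isTopologicalBasis_stoneBasis.isOpen_iff (t := stoneTop _)).mp hopen _ (mem_nBisimQ_self 0 _)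
  let N := φ.maxAtom
  have hsat : (deadModel (Set.Iic N)).sat φ :=
    (deadModel_sat_congr φ fun p hp => by simpa using hp).mp hφ
  have hball := atom_iff_of_nBisimQ_zero
    (hsub (a := Quot.mk _ ⟨deadModel (Set.Iic N), _, rfl⟩) hsat) (N + 1)
  exact absurd (hball.mp trivial) (by simp [deadModel, N])

end DeadModels

/-- Over countably infinitely many atoms, the `n`-bisimulation topology
on a modal space (where modal equivalence coincides with bisimilarity) is finer than
the Stone topology, and on a sufficiently rich such space it is strictly finer:
some `n`-bisimulation ball is not Stone-open. -/
theorem stmt_10 :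
    (∀ X : Set (PointedModel ℕ Unit),
      (∀ x ∈ X, ∀ y ∈ X, modEquiv x y ↔ Bisimilar x y) →
      ∀ U : Set (MSpace X), (stoneTop X).IsOpen U → (bisimTop X).IsOpen U) ∧
    (∃ X : Set (PointedModel ℕ Unit),
      (∀ x ∈ X, ∀ y ∈ X, modEquiv x y ↔ Bisimilar x y) ∧
      ∃ a : MSpace X, (bisimTop X).IsOpen {b : MSpace X | nBisimQ 0 a b} ∧
        ¬ (stoneTop X).IsOpen {b : MSpace X | nBisimQ 0 a b}) :=
  ⟨fun _ _ U => bisimTop_le_stoneTop U,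
    Set.range deadModel, fun _ hx _ hy => modEquiv_iff_bisimilar_of_mem_range_deadModel hx hy,
    _, isOpen_bisimTop_ball _ 0, not_isOpen_stoneTop_ball_deadModel_univ⟩
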